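/- Let 1 ≤ j < n and let S_{j+1} be obtained from an L_j^- PTS by adding a horizontal edge configuration between aisles j and j+1. If the degrees of a_j and b_j in S_{j+1} are odd, then 1pass is the only vertical edge configuration in aisle j that can be valid for S_{j+1}. If instead the degrees of a_j and b_j in S_{j+1} are both even (possibly zero), then 1pass is not valid for S_{j+1}. -/

import Mathlib

/-- Degree parity class of a vertex: degree zero, odd degree, or even positive degree. -/
inductive DegClass : Type
  | zero : DegClass
  | odd : DegClass
  | evenPos : DegClass
deriving DecidableEq

/-- The parity class of a natural number (a degree). -/
def degClass (d : ℕ) : DegClass :=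
  if d = 0 then .zero else if d % 2 = 1 then .odd else .evenPos

/-- Names of the six vertical edge configurations. -/
inductive VCName : Type
  | onepass : VCName
  | top : VCName
  | bottom : VCName
  | gap : VCName
  | twopass : VCName
  | none : VCName
deriving DecidableEq

/-- Names of the five horizontal edge configurations. -/
inductive HCName : Type
  | h11 : HCName
  | h20 : HCName
  | h02 : HCName
  | h22 : HCName
  | h00 : HCName
deriving DecidableEq

/-- Number of copies of the back cross-aisle edge `a_j a_{j+1}` in a horizontal configuration. -/
def hcA : HCName → ℕ
  | .h11 => 1
  | .h20 => 2
  | .h02 => 0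
  | .h22 => 2
  | .h00 => 0

/-- Number of copies of the front cross-aisle edge `b_j b_{j+1}` in a horizontal configuration. -/
def hcB : HCName → ℕ
  | .h11 => 1
  | .h20 => 0
  | .h02 => 2
  | .h22 => 2
  | .h00 => 0

/-- The seven equivalence classes, as triples (parity of `a_j`, parity of `b_j`, #components). -/
def cUU1C : DegClass × DegClass × ℕ := (.odd, .odd, 1)
def c0E1C : DegClass × DegClass × ℕ := (.zero, .evenPos, 1)
def cE01C : DegClass × DegClass × ℕ := (.evenPos, .zero, 1)
def cEE1C : DegClass × DegClass × ℕ := (.evenPos, .evenPos, 1)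
def cEE2C : DegClass × DegClass × ℕ := (.evenPos, .evenPos, 2)
def c000C : DegClass × DegClass × ℕ := (.zero, .zero, 0)
def c001C : DegClass × DegClass × ℕ := (.zero, .zero, 1)

/-- A single-block parallel-aisle warehouse in the sense of Ratliff and Rosenthal:
`n ≥ 1` vertical pick aisles, two horizontal cross-aisles, `picks j` pick vertices
strictly inside aisle `j`, nonnegative edge lengths, and a depot located at some
cross-aisle vertex `a_j` (if `depotTop`) or `b_j`. -/
structure Warehouse where
  n : ℕ
  npos : 1 ≤ n
  picks : Fin n → ℕ
  vlen : (j : Fin n) → Fin (picks j + 1) → ℝ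
  hlenA : Fin (n - 1) → ℝ
  hlenB : Fin (n - 1) → ℝ
  vlen_nonneg : ∀ j i, 0 ≤ vlen j i
  hlenA_nonneg : ∀ k, 0 ≤ hlenA k
  hlenB_nonneg : ∀ k, 0 ≤ hlenB k
  depotAisle : Fin n
  depotTop : Bool

namespace Warehouse

variable (W : Warehouse)

/-- Vertices of the warehouse graph: in aisle `j`, position `0` is the back cross-aisle
vertex `a_j`, position `picks j + 1` is the front cross-aisle vertex `b_j`, and
positions `1, …, picks j` are the pick vertices of aisle `j`. -/
def V : Type := Σ j : Fin W.n, Fin (W.picks j + 2)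

instance : DecidableEq W.V :=
  inferInstanceAs (DecidableEq (Σ j : Fin W.n, Fin (W.picks j + 2)))

instance : Fintype W.V :=
  inferInstanceAs (Fintype (Σ j : Fin W.n, Fin (W.picks j + 2)))

/-- The back cross-aisle vertex `a_j`. -/
def aV (j : Fin W.n) : W.V := ⟨j, 0⟩

/-- The front cross-aisle vertex `b_j`. -/
def bV (j : Fin W.n) : W.V := ⟨j, Fin.last (W.picks j + 1)⟩

/-- The depot vertex `v₀`. -/
def depot : W.V := if W.depotTop then W.aV W.depotAisle else W.bV W.depotAisle

/-- `v` is a pick vertex, i.e. a vertex strictly inside an aisle. -/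
def IsPick (v : W.V) : Prop := 0 < v.2.val ∧ v.2.val < W.picks v.1 + 1

/-- `v` is a required vertex, i.e. a member of `P` (a pick vertex or the depot). -/
def Required (v : W.V) : Prop := W.IsPick v ∨ v = W.depot

/-- Edges of the warehouse graph: a vertical edge `⟨j, i⟩` joins positions `i` and
`i+1` of aisle `j`; horizontal edges `inr (inl k)` join `a_k a_{k+1}` and
`inr (inr k)` join `b_k b_{k+1}`. -/
def E : Type := (Σ j : Fin W.n, Fin (W.picks j + 1)) ⊕ (Fin (W.n - 1) ⊕ Fin (W.n - 1))

instance : DecidableEq W.E :=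
  inferInstanceAs (DecidableEq ((Σ j : Fin W.n, Fin (W.picks j + 1)) ⊕ (Fin (W.n - 1) ⊕ Fin (W.n - 1))))

instance : Fintype W.E :=
  inferInstanceAs (Fintype ((Σ j : Fin W.n, Fin (W.picks j + 1)) ⊕ (Fin (W.n - 1) ⊕ Fin (W.n - 1))))

/-- The left aisle of a horizontal edge index. -/
def leftAisle (k : Fin (W.n - 1)) : Fin W.n := ⟨k.val, by have := k.isLt; omega⟩

/-- The right aisle of a horizontal edge index. -/
def rightAisle (k : Fin (W.n - 1)) : Fin W.n := ⟨k.val + 1, by have := k.isLt; omega⟩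

/-- Endpoints of an edge. -/
def ends : W.E → W.V × W.V
  | .inl ⟨j, i⟩ => (⟨j, i.castSucc⟩, ⟨j, i.succ⟩)
  | .inr (.inl k) => (W.aV (W.leftAisle k), W.aV (W.rightAisle k))
  | .inr (.inr k) => (W.bV (W.leftAisle k), W.bV (W.rightAisle k))

/-- Length of an edge. -/
def elen : W.E → ℝ
  | .inl ⟨j, i⟩ => W.vlen j i
  | .inr (.inl k) => W.hlenA k
  | .inr (.inr k) => W.hlenB k

/-- A subgraph of `G` is a multiplicity function taking each edge with multiplicity at most 2. -/
def IsSub (T : W.E → ℕ) : Prop := ∀ e, T e ≤ 2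

/-- Degree of a vertex in a subgraph, counting edges with multiplicity. -/
def deg (T : W.E → ℕ) (v : W.V) : ℕ :=
  ∑ e : W.E, T e * ((if (W.ends e).1 = v then 1 else 0) + (if (W.ends e).2 = v then 1 else 0))

/-- Total length of a subgraph, counting edges with multiplicity. -/
def length (T : W.E → ℕ) : ℝ := ∑ e : W.E, (T e : ℝ) * W.elen e

/-- Source of a directed traversal step. -/
def stepSrc (s : W.E × Bool) : W.V := if s.2 then (W.ends s.1).1 else (W.ends s.1).2

/-- Destination of a directed traversal step. -/
def stepDst (s : W.E × Bool) : W.V := if s.2 then (W.ends s.1).2 else (W.ends s.1).1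

/-- A list of directed steps is a closed walk. -/
def IsClosedWalk (l : List (W.E × Bool)) : Prop :=
  l.Chain' (fun s t => W.stepDst s = W.stepSrc t) ∧
  ∀ s ∈ l.head?, ∀ t ∈ l.getLast?, W.stepDst t = W.stepSrc s

/-- `T` is a tour subgraph: every required vertex has positive degree and there is a
closed walk traversing every edge of `T`, counted with multiplicity, exactly once. -/
def IsTour (T : W.E → ℕ) : Prop :=
  W.IsSub T ∧ (∀ v, W.Required v → 0 < W.deg T v) ∧
  ∃ l : List (W.E × Bool), W.IsClosedWalk l ∧ ∀ e : W.E, (l.map Prod.fst).count e = T e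

/-- `T` is an `L` partial tour subgraph: `T` is a subgraph supported on `L` and there is a
subgraph `C` of `G − L` such that `T ∪ C` is a tour subgraph of `G`. -/
def IsPTS (L : Set W.E) (T : W.E → ℕ) : Prop :=
  W.IsSub T ∧ (∀ e ∉ L, T e = 0) ∧
  ∃ C : W.E → ℕ, W.IsSub C ∧ (∀ e ∈ L, C e = 0) ∧ W.IsTour (fun e => T e + C e)

/-- Two `L` PTSs are equivalent: any completion of one is a completion of the other. -/
def EquivPTS (L : Set W.E) (T₁ T₂ : W.E → ℕ) : Prop :=
  ∀ C : W.E → ℕ, W.IsSub C → (∀ e ∈ L, C e = 0) →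
    (W.IsTour (fun e => T₁ e + C e) ↔ W.IsTour (fun e => T₂ e + C e))

/-- The edge set containing the vertical edges of the (0-indexed) aisles `< vmax` and the
horizontal edges with (0-indexed) index `< hmax`.  Thus, in paper (1-indexed) notation,
`L_j = edgesUpTo j (j-1)`, `L_j^- = edgesUpTo (j-1) (j-1)` and `G = edgesUpTo n (n-1)`. -/
def edgesUpTo (vmax hmax : ℕ) : Set W.E := fun e =>
  match e with
  | .inl ⟨i, _⟩ => i.val < vmax
  | .inr (.inl k) => k.val < hmax
  | .inr (.inr k) => k.val < hmax

/-- The simple graph on the vertices of `G` induced by the edges of positive multiplicity. -/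
def sgraph (T : W.E → ℕ) : SimpleGraph W.V where
  Adj v w := v ≠ w ∧ ∃ e, 0 < T e ∧
    (((W.ends e).1 = v ∧ (W.ends e).2 = w) ∨ ((W.ends e).1 = w ∧ (W.ends e).2 = v))
  symm := by
    constructor
    intro v w hvw
    obtain ⟨hne, e, he, hor⟩ := hvw
    exact ⟨hne.symm, e, he, hor.symm⟩
  loopless := by constructor; intro v h; exact h.1 rfl

/-- Number of connected components of a subgraph after deleting all vertices of degree zero. -/
noncomputable def numComp (T : W.E → ℕ) : ℕ :=
  Nat.card ((W.sgraph T).induce {v : W.V | 0 < W.deg T v}).ConnectedComponent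

/-- `v` and `w` both have positive degree but lie in different connected components of `T`. -/
def SepComp (T : W.E → ℕ) (v w : W.V) : Prop :=
  0 < W.deg T v ∧ 0 < W.deg T w ∧ ¬ (W.sgraph T).Reachable v w

/-- The equivalence class of a subgraph relative to the cross-aisle vertices of aisle `j`:
the degree parities of `a_j` and `b_j` and the number of nonempty connected components. -/
noncomputable def classOf (T : W.E → ℕ) (j : Fin W.n) : DegClass × DegClass × ℕ :=
  (degClass (W.deg T (W.aV j)), degClass (W.deg T (W.bV j)), W.numComp T)

theorem exists_gapIdx (j : Fin W.n) :
    ∃ g : Fin (W.picks j + 1), ∀ i, W.vlen j i ≤ W.vlen j g := by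
  obtain ⟨g, -, hg⟩ :=
    Finset.exists_max_image (Finset.univ : Finset (Fin (W.picks j + 1))) (W.vlen j)
      ⟨0, Finset.mem_univ 0⟩
  exact ⟨g, fun i => hg i (Finset.mem_univ i)⟩

/-- The vertical edge of aisle `j` of maximum length: the edge omitted by the `gap`
configuration (which leaves the largest section of the aisle unconnected). -/
noncomputable def gapIdx (j : Fin W.n) : Fin (W.picks j + 1) := (W.exists_gapIdx j).choose

theorem gapIdx_spec (j : Fin W.n) : ∀ i, W.vlen j i ≤ W.vlen j (W.gapIdx j) :=
  (W.exists_gapIdx j).choose_spec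

/-- The multiplicity of the `i`-th vertical edge of aisle `j` in each of the six vertical
edge configurations. -/
noncomputable def vconfFun (j : Fin W.n) (c : VCName) (i : Fin (W.picks j + 1)) : ℕ :=
  match c with
  | .onepass => 1
  | .top => if i.val < W.picks j then 2 else 0
  | .bottom => if 1 ≤ i.val then 2 else 0
  | .gap => if i = W.gapIdx j then 0 else 2
  | .twopass => 2
  | .none => 0

/-- A vertical edge configuration in aisle `j`, as a subgraph of `G`. -/
noncomputable def vcSub (j : Fin W.n) (c : VCName) : W.E → ℕ := fun e =>
  match e with
  | .inl ⟨i, x⟩ =>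
      if h : i = j then W.vconfFun j c ⟨x.val, by exact h ▸ x.isLt⟩ else 0
  | .inr _ => 0

/-- A horizontal edge configuration between aisles `k` and `k+1`, as a subgraph of `G`. -/
def hcSub (k : Fin (W.n - 1)) (c : HCName) : W.E → ℕ := fun e =>
  match e with
  | .inl _ => 0
  | .inr (.inl k') => if k' = k then hcA c else 0
  | .inr (.inr k') => if k' = k then hcB c else 0

end Warehouse

/-! A closed walk leaves every vertex as often as it enters it, so every vertex of a tour
subgraph has even degree. All edges at `a_j` lie in `L_{j+1}^-`, so a completion of an
`L_{j+1}^-` PTS adds nothing at `a_j`, and the degree of `a_j` in the PTS itself is even.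
Every vertical configuration other than `1pass` takes each edge an even number of times and
so preserves the parity of `a_j`, while `1pass` adds exactly one edge at `a_j`. -/

theorem Finset.sum_count_mul_eq_sum_map {α : Type*} [Fintype α] [DecidableEq α]
    (l : List α) (f : α → ℕ) : ∑ a, l.count a * f a = (l.map f).sum := by
  rw [Finset.sum_list_map_count]
  refine (Finset.sum_subset (Finset.subset_univ _) fun a _ ha => ?_).symm
  rw [List.count_eq_zero_of_not_mem (mt List.mem_toFinset.2 ha), zero_mul]

theorem List.sum_map_ite_eq_count {α β : Type*} [DecidableEq β] (l : List α) (p : α → β)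
    (b : β) : (l.map fun x => if p x = b then 1 else 0).sum = (l.map p).count b := by
  induction l with
  | nil => rfl
  | cons a l ih => by_cases h : p a = b <;> simp [h, ih, add_comm]

theorem List.map_cons_eq_map_append_getLast {α β : Type*} {f g : α → β} :
    ∀ {a : α} {l : List α}, (a :: l).IsChain (fun x y => g x = f y) →
      (a :: l).map g = l.map f ++ [g ((a :: l).getLast (List.cons_ne_nil a l))]
  | _, [], _ => rfl
  | _, b :: l, h => by
    rw [List.isChain_cons_cons] at h
    rw [List.map_cons, List.map_cons_eq_map_append_getLast h.2, h.1, List.getLast_cons_cons]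
    rfl

namespace Warehouse

variable {W : Warehouse}

theorem IsClosedWalk.map_stepDst_perm {l : List (W.E × Bool)}
    (hl : W.IsClosedWalk l) : (l.map W.stepDst).Perm (l.map W.stepSrc) := by
  obtain ⟨hchain, hclose⟩ := hl
  cases l with
  | nil => rfl
  | cons a l =>
    rw [List.map_cons_eq_map_append_getLast hchain,
      hclose a rfl _ (List.getLast?_eq_some_getLast _)]
    exact List.perm_append_singleton _ _

theorem deg_add (A B : W.E → ℕ) (v : W.V) :
    W.deg (fun e => A e + B e) v = W.deg A v + W.deg B v := by
  simp only [deg, add_mul, Finset.sum_add_distrib]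

theorem deg_eq_count_stepSrc_add_count_stepDst {T : W.E → ℕ} {l : List (W.E × Bool)}
    (hl : ∀ e, (l.map Prod.fst).count e = T e) (v : W.V) :
    W.deg T v = (l.map W.stepSrc).count v + (l.map W.stepDst).count v := by
  simp only [deg, ← hl, Finset.sum_count_mul_eq_sum_map, List.map_map]
  rw [← List.sum_map_ite_eq_count, ← List.sum_map_ite_eq_count, ← List.sum_map_add]
  congr 1
  refine List.map_congr_left fun s _ => ?_
  rcases s with ⟨e, _ | _⟩ <;> simp [stepSrc, stepDst, add_comm]

theorem IsTour.even_deg {T : W.E → ℕ} (hT : W.IsTour T) (v : W.V) : Even (W.deg T v) := by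
  obtain ⟨-, -, l, hl, hcount⟩ := hT
  rw [deg_eq_count_stepSrc_add_count_stepDst hcount, hl.map_stepDst_perm.count_eq]
  exact ⟨_, rfl⟩

theorem IsPTS.even_deg {L : Set W.E} {T : W.E → ℕ} (hT : W.IsPTS L T) {v : W.V}
    (hv : ∀ e, (W.ends e).1 = v ∨ (W.ends e).2 = v → e ∈ L) : Even (W.deg T v) := by
  obtain ⟨-, -, C, -, hCL, hTC⟩ := hT
  have hC : W.deg C v = 0 := Finset.sum_eq_zero fun e _ => by
    by_cases he : e ∈ L
    · simp [hCL e he]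
    · obtain ⟨h₁, h₂⟩ := not_or.mp (mt (hv e) he)
      simp [h₁, h₂]
  simpa [deg_add, hC] using hTC.even_deg v

theorem mem_edgesUpTo_of_ends_eq {e : W.E} {v : W.V}
    (hv : (W.ends e).1 = v ∨ (W.ends e).2 = v) :
    e ∈ W.edgesUpTo (v.1.val + 1) (v.1.val + 1) := by
  rcases e with ⟨i, x⟩ | k | k <;> rcases hv with rfl | rfl <;>
    simp only [ends, aV, bV, leftAisle, rightAisle] <;> show (_ : ℕ) < _ <;> omega

theorem even_deg_of_forall_even {T : W.E → ℕ} (hT : ∀ e, Even (T e)) (v : W.V) :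
    Even (W.deg T v) :=
  Finset.even_sum _ fun e _ => (hT e).mul_right _

theorem even_vconfFun {j : Fin W.n} {c : VCName} (hc : c ≠ .onepass)
    (i : Fin (W.picks j + 1)) : Even (W.vconfFun j c i) := by
  cases c with
  | onepass => exact absurd rfl hc
  | _ => simp only [vconfFun]; (try split_ifs) <;> decide

theorem even_vcSub {j : Fin W.n} {c : VCName} (hc : c ≠ .onepass) (e : W.E) :
    Even (W.vcSub j c e) := by
  rcases e with ⟨i, x⟩ | _
  · simp only [vcSub]
    split_ifs
    exacts [even_vconfFun hc _, ⟨0, rfl⟩]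
  · exact ⟨0, rfl⟩

theorem ends_inl_fst_eq_aV_iff {i j : Fin W.n} {x : Fin (W.picks i + 1)} :
    (W.ends (.inl ⟨i, x⟩)).1 = W.aV j ↔ i = j ∧ x = 0 := by
  constructor
  · intro h
    obtain ⟨rfl, h⟩ := Sigma.mk.inj_iff.mp h
    exact ⟨rfl, Fin.castSucc_eq_zero_iff.mp (eq_of_heq h)⟩
  · rintro ⟨rfl, rfl⟩
    rfl

theorem ends_inl_snd_ne_aV {i j : Fin W.n} {x : Fin (W.picks i + 1)} :
    (W.ends (.inl ⟨i, x⟩)).2 ≠ W.aV j := fun h => by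
  obtain ⟨rfl, h⟩ := Sigma.mk.inj_iff.mp h
  exact Fin.succ_ne_zero x (eq_of_heq h)

theorem deg_vcSub_onepass_aV (j : Fin W.n) : W.deg (W.vcSub j .onepass) (W.aV j) = 1 := by
  rw [deg, Fintype.sum_eq_single (α := W.E) (Sum.inl ⟨j, 0⟩)]
  · simp [vcSub, vconfFun, ends_inl_fst_eq_aV_iff, ends_inl_snd_ne_aV]
  · rintro (⟨i, x⟩ | k) hne
    · by_cases hij : i = j
      · subst hij
        have hx : x ≠ 0 := fun hx => hne (by rw [hx])
        simp [ends_inl_fst_eq_aV_iff, ends_inl_snd_ne_aV, hx]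
      · simp [vcSub, hij]
    · simp [vcSub]

end Warehouse

/-- Corollary 2: if the degrees of `a_j` and `b_j` in `S_{j+1}` are odd
then `1pass` is the only vertical configuration in aisle `j` that can be valid; if both
are even then `1pass` is not valid. -/
theorem stmt6 (W : Warehouse) (j : Fin W.n) (S : W.E → ℕ) :
    ((Odd (W.deg S (W.aV j)) ∧ Odd (W.deg S (W.bV j))) →
      ∀ c : VCName, c ≠ VCName.onepass →
        ¬ W.IsPTS (W.edgesUpTo (j.val + 1) (j.val + 1)) (fun e => S e + W.vcSub j c e)) ∧
    ((Even (W.deg S (W.aV j)) ∧ Even (W.deg S (W.bV j))) →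
      ¬ W.IsPTS (W.edgesUpTo (j.val + 1) (j.val + 1))
          (fun e => S e + W.vcSub j VCName.onepass e)) := by
  have star_aV : ∀ e, (W.ends e).1 = W.aV j ∨ (W.ends e).2 = W.aV j →
      e ∈ W.edgesUpTo (j.val + 1) (j.val + 1) := fun _ => Warehouse.mem_edgesUpTo_of_ends_eq
  refine ⟨fun ⟨hoddA, _⟩ c hc hPTS => ?_, fun ⟨hevenA, _⟩ hPTS => ?_⟩
  · have heven := hPTS.even_deg star_aV
    rw [Warehouse.deg_add, Nat.even_add] at heven
    exact Nat.not_even_iff_odd.mpr hoddA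
      (heven.mpr (Warehouse.even_deg_of_forall_even (Warehouse.even_vcSub hc) _))
  · have heven := hPTS.even_deg star_aV
    rw [Warehouse.deg_add, Warehouse.deg_vcSub_onepass_aV, Nat.even_add] at heven
    exact Nat.not_even_one (heven.mp hevenA)
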